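/- arXiv:2410.03353 — 3 statements merged into one kernel-verified Lean document; each statement's English description precedes it below -/
import Mathlib

section
/- Let ε > 0 and let (f, g) be a pair of ε-potentials. For every x ∈ Ω₀ and t > 0 with x + t ∈ Ω₀, setting T(x) := (∫_{S_x} y dμ₁(y))/μ₁(S_x), one has T(x + t) ≥ (f(x + t) − f(x))/t ≥ T(x); in particular T is nondecreasing on Ω₀. -/
open MeasureTheory Set
open scoped Classical ENNReal

noncomputable section

/-- `μ` is a probability measure supported on `[a,b]` with continuous density `u`
bounded below by `lam` and above by `Lam` on `[a,b]`. -/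
def IsGoodMarginal (μ : Measure ℝ) (u : ℝ → ℝ) (a b lam Lam : ℝ) : Prop :=
  IsProbabilityMeasure μ ∧
  μ = (volume.restrict (Icc a b)).withDensity (fun x => ENNReal.ofReal (u x)) ∧
  ContinuousOn u (Icc a b) ∧
  ∀ x ∈ Icc a b, lam ≤ u x ∧ u x ≤ Lam

/-- `(f,g)` is a pair of `ε`-potentials for the quadratically regularized OT problem. -/
def IsPotentialPair (μ₀ μ₁ : Measure ℝ) (a₀ b₀ a₁ b₁ ε : ℝ) (f g : ℝ → ℝ) : Prop :=
  (∃ K, LipschitzOnWith K f (Icc a₀ b₀)) ∧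
  (∃ K, LipschitzOnWith K g (Icc a₁ b₁)) ∧
  (∀ x ∈ Icc a₀ b₀, ∫ y in Icc a₁ b₁, max (x * y - f x - g y) 0 ∂μ₁ = ε) ∧
  (∀ y ∈ Icc a₁ b₁, ∫ x in Icc a₀ b₀, max (x * y - f x - g y) 0 ∂μ₀ = ε)

/-- the `x`-section `S_x` of the support of the optimal coupling. -/
def secX (f g : ℝ → ℝ) (a₁ b₁ x : ℝ) : Set ℝ :=
  {y ∈ Icc a₁ b₁ | 0 ≤ x * y - f x - g y}

/-- the `y`-section `S^y` of the support of the optimal coupling. -/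
def secY (f g : ℝ → ℝ) (a₀ b₀ y : ℝ) : Set ℝ :=
  {x ∈ Icc a₀ b₀ | 0 ≤ x * y - f x - g y}

/-- `T_ε(x) = (∫_{S_x} y dμ₁)/μ₁(S_x)`, the derivative `f'` of the potential `f`. -/
def Tmap (μ₁ : Measure ℝ) (f g : ℝ → ℝ) (a₁ b₁ x : ℝ) : ℝ :=
  (∫ y in secX f g a₁ b₁ x, y ∂μ₁) / (μ₁ (secX f g a₁ b₁ x)).toReal

/-- the symmetric quantity, the derivative `g'` of the potential `g`. -/
def Gmap (μ₀ : Measure ℝ) (f g : ℝ → ℝ) (a₀ b₀ y : ℝ) : ℝ :=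
  (∫ x in secY f g a₀ b₀ y, x ∂μ₀) / (μ₀ (secY f g a₀ b₀ y)).toReal

/-- left endpoint `y_m(x)` of `S_x`. -/
def ymF (f g : ℝ → ℝ) (a₁ b₁ x : ℝ) : ℝ := sInf (secX f g a₁ b₁ x)

/-- right endpoint `y_M(x)` of `S_x`. -/
def yMF (f g : ℝ → ℝ) (a₁ b₁ x : ℝ) : ℝ := sSup (secX f g a₁ b₁ x)

/-- left endpoint `x_m(y)` of `S^y`. -/
def xmF (f g : ℝ → ℝ) (a₀ b₀ y : ℝ) : ℝ := sInf (secY f g a₀ b₀ y)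

/-- right endpoint `x_M(y)` of `S^y`. -/
def xMF (f g : ℝ → ℝ) (a₀ b₀ y : ℝ) : ℝ := sSup (secY f g a₀ b₀ y)

/-- `T₀` is the (nondecreasing) Monge map from `μ₀` to `μ₁`. -/
def IsMongeMap (μ₀ μ₁ : Measure ℝ) (T₀ : ℝ → ℝ) : Prop :=
  Monotone T₀ ∧ Measure.map T₀ μ₀ = μ₁

/-- convex conjugate relative to `[a,b]`. -/
def conjOn (f : ℝ → ℝ) (a b y : ℝ) : ℝ := sSup ((fun x => x * y - f x) '' Icc a b)

/-!
For `x, x' ∈ Ω₀` the difference `ξ(x', y) - ξ(x, y) = (x' - x) y - (f x' - f x)` is affine in `y`.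
Integrating it over `S_x`, where `ξ(x, ·) ≥ 0`, and using
`∫_{S_x} ξ(x', ·) dμ₁ ≤ ∫ ξ(x', ·)₊ dμ₁ = ε = ∫ ξ(x, ·)₊ dμ₁ = ∫_{S_x} ξ(x, ·) dμ₁` gives
`(x' - x) ∫_{S_x} y dμ₁ ≤ (f x' - f x) μ₁(S_x)`. Dividing by `μ₁(S_x) > 0` yields `T(x) ≤` slope
for `x < x'`, and exchanging the roles of `x` and `x'` yields slope `≤ T(x')`.
-/

section PositivePart

variable {α : Type*} [MeasurableSpace α] {μ : Measure α} {s t : Set α} {h : α → ℝ}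

lemma setIntegral_max_zero_eq (hs : MeasurableSet s) (ht : MeasurableSet {y ∈ s | 0 ≤ h y}) :
    ∫ y in s, max (h y) 0 ∂μ = ∫ y in {y ∈ s | 0 ≤ h y}, h y ∂μ := by
  have hind : ∀ y ∈ s, max (h y) 0 = {y ∈ s | 0 ≤ h y}.indicator h y := by
    intro y hy
    by_cases hpos : 0 ≤ h y
    · rw [indicator_of_mem (show y ∈ {y ∈ s | 0 ≤ h y} from ⟨hy, hpos⟩), max_eq_left hpos]
    · rw [indicator_of_notMem fun hmem : y ∈ {y ∈ s | 0 ≤ h y} => hpos hmem.2,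
        max_eq_right (not_le.1 hpos).le]
  rw [setIntegral_congr_fun hs hind, setIntegral_indicator ht,
    inter_eq_self_of_subset_right (sep_subset s _)]

lemma setIntegral_le_setIntegral_max_zero (hh : IntegrableOn h s μ) (ht : MeasurableSet t)
    (hts : t ⊆ s) : ∫ y in t, h y ∂μ ≤ ∫ y in s, max (h y) 0 ∂μ := by
  have hmax : IntegrableOn (fun y => max (h y) 0) s μ := hh.sup integrableOn_zero
  calc ∫ y in t, h y ∂μ
      ≤ ∫ y in t, max (h y) 0 ∂μ :=
        setIntegral_mono_on (hh.mono_set hts) (hmax.mono_set hts) ht fun y _ => le_max_left _ _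
    _ ≤ ∫ y in s, max (h y) 0 ∂μ :=
        setIntegral_mono_set hmax (.of_forall fun y => le_max_right _ _) hts.eventuallyLE

end PositivePart

section Sections

variable {μ : Measure ℝ} {f g : ℝ → ℝ} {a b x x' : ℝ}

lemma continuousOn_xi (hg : ContinuousOn g (Icc a b)) (x : ℝ) :
    ContinuousOn (fun y => x * y - f x - g y) (Icc a b) := by
  fun_prop

lemma isClosed_secX (hg : ContinuousOn g (Icc a b)) (x : ℝ) : IsClosed (secX f g a b x) :=
  (continuousOn_xi hg x).preimage_isClosed_of_isClosed isClosed_Icc isClosed_Ici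

lemma setIntegral_secX_eq (hg : ContinuousOn g (Icc a b)) (x : ℝ) :
    ∫ y in secX f g a b x, (x * y - f x - g y) ∂μ =
      ∫ y in Icc a b, max (x * y - f x - g y) 0 ∂μ :=
  (setIntegral_max_zero_eq measurableSet_Icc (isClosed_secX hg x).measurableSet).symm

variable [IsFiniteMeasure μ]

lemma measure_secX_pos (hg : ContinuousOn g (Icc a b))
    (hpos : 0 < ∫ y in Icc a b, max (x * y - f x - g y) 0 ∂μ) :
    0 < (μ (secX f g a b x)).toReal := by
  refine ENNReal.toReal_pos (fun h0 => ?_) (measure_ne_top _ _)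
  rw [← setIntegral_secX_eq hg, Measure.restrict_eq_zero.2 h0, integral_zero_measure] at hpos
  exact lt_irrefl 0 hpos

lemma mul_setIntegral_secX_le (hg : ContinuousOn g (Icc a b))
    (hle : ∫ y in Icc a b, max (x' * y - f x' - g y) 0 ∂μ ≤
      ∫ y in Icc a b, max (x * y - f x - g y) 0 ∂μ) :
    (x' - x) * ∫ y in secX f g a b x, y ∂μ ≤ (f x' - f x) * (μ (secX f g a b x)).toReal := by
  set S := secX f g a b x
  have hS : MeasurableSet S := (isClosed_secX hg x).measurableSet
  have hSsub : S ⊆ Icc a b := sep_subset _ _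
  have hint : ∀ z, IntegrableOn (fun y => z * y - f z - g y) S μ := fun z =>
    ((continuousOn_xi hg z).integrableOn_compact isCompact_Icc).mono_set hSsub
  have hid : IntegrableOn (fun y : ℝ => y) S μ :=
    (continuous_id.continuousOn.integrableOn_compact isCompact_Icc).mono_set hSsub
  have hdiff : ∫ y in S, (x' * y - f x' - g y) ∂μ - ∫ y in S, (x * y - f x - g y) ∂μ =
      (x' - x) * ∫ y in S, y ∂μ - (f x' - f x) * (μ S).toReal := by
    rw [← integral_sub (hint x') (hint x)]
    simp_rw [show ∀ y, x' * y - f x' - g y - (x * y - f x - g y) = (x' - x) * y - (f x' - f x)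
      from fun y => by ring]
    rw [integral_sub (hid.const_mul _) (integrableOn_const (measure_ne_top _ _)),
      integral_const_mul, setIntegral_const, smul_eq_mul, measureReal_def]
    ring
  have hx'S : ∫ y in S, (x' * y - f x' - g y) ∂μ ≤
      ∫ y in Icc a b, max (x' * y - f x' - g y) 0 ∂μ :=
    setIntegral_le_setIntegral_max_zero
      ((continuousOn_xi hg x').integrableOn_compact isCompact_Icc) hS hSsub
  have hxS : ∫ y in S, (x * y - f x - g y) ∂μ =
      ∫ y in Icc a b, max (x * y - f x - g y) 0 ∂μ :=
    setIntegral_secX_eq hg x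
  linarith

lemma Tmap_le_slope (hg : ContinuousOn g (Icc a b))
    (hpos : 0 < ∫ y in Icc a b, max (x * y - f x - g y) 0 ∂μ)
    (hle : ∫ y in Icc a b, max (x' * y - f x' - g y) 0 ∂μ ≤
      ∫ y in Icc a b, max (x * y - f x - g y) 0 ∂μ) (hxx' : x < x') :
    Tmap μ f g a b x ≤ (f x' - f x) / (x' - x) := by
  rw [Tmap, div_le_div_iff₀ (measure_secX_pos hg hpos) (sub_pos.2 hxx'), mul_comm]
  exact mul_setIntegral_secX_le hg hle

lemma slope_le_Tmap (hg : ContinuousOn g (Icc a b))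
    (hpos : 0 < ∫ y in Icc a b, max (x' * y - f x' - g y) 0 ∂μ)
    (hle : ∫ y in Icc a b, max (x * y - f x - g y) 0 ∂μ ≤
      ∫ y in Icc a b, max (x' * y - f x' - g y) 0 ∂μ) (hxx' : x < x') :
    (f x' - f x) / (x' - x) ≤ Tmap μ f g a b x' := by
  rw [Tmap, div_le_div_iff₀ (sub_pos.2 hxx') (measure_secX_pos hg hpos)]
  have := mul_setIntegral_secX_le hg hle
  linarith

end Sections

theorem stmt0_general
    (a₀ b₀ a₁ b₁ lam Lam : ℝ) (μ₀ μ₁ : Measure ℝ) (u₁ : ℝ → ℝ)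
    (hμ₁ : IsGoodMarginal μ₁ u₁ a₁ b₁ lam Lam)
    (ε : ℝ) (hε : 0 < ε) (f g : ℝ → ℝ)
    (hfg : IsPotentialPair μ₀ μ₁ a₀ b₀ a₁ b₁ ε f g) :
    (∀ x ∈ Icc a₀ b₀, ∀ t : ℝ, 0 < t → x + t ∈ Icc a₀ b₀ →
      Tmap μ₁ f g a₁ b₁ x ≤ (f (x + t) - f x) / t ∧
      (f (x + t) - f x) / t ≤ Tmap μ₁ f g a₁ b₁ (x + t)) ∧
    MonotoneOn (Tmap μ₁ f g a₁ b₁) (Icc a₀ b₀) := by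
  obtain ⟨-, ⟨K, hgLip⟩, hF, -⟩ := hfg
  have : IsProbabilityMeasure μ₁ := hμ₁.1
  have hg := hgLip.continuousOn
  have bounds : ∀ x ∈ Icc a₀ b₀, ∀ x' ∈ Icc a₀ b₀, x < x' →
      Tmap μ₁ f g a₁ b₁ x ≤ (f x' - f x) / (x' - x) ∧
      (f x' - f x) / (x' - x) ≤ Tmap μ₁ f g a₁ b₁ x' := fun x hx x' hx' hxx' =>
    ⟨Tmap_le_slope hg (hε.trans_eq (hF x hx).symm) ((hF x' hx').trans (hF x hx).symm).le hxx',
      slope_le_Tmap hg (hε.trans_eq (hF x' hx').symm) ((hF x hx).trans (hF x' hx').symm).le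
        hxx'⟩
  refine ⟨fun x hx t ht hxt => ?_, fun x hx x' hx' hxx' => ?_⟩
  · simpa only [add_sub_cancel_left] using bounds x hx (x + t) hxt (lt_add_of_pos_right x ht)
  · rcases hxx'.eq_or_lt with rfl | hlt
    · exact le_rfl
    · exact (bounds x hx x' hx' hlt).1.trans (bounds x hx x' hx' hlt).2

theorem stmt0
    (a₀ b₀ a₁ b₁ lam Lam : ℝ) (μ₀ μ₁ : Measure ℝ) (u₀ u₁ : ℝ → ℝ)
    (hab₀ : a₀ < b₀) (hab₁ : a₁ < b₁) (hlam : 0 < lam)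
    (hμ₀ : IsGoodMarginal μ₀ u₀ a₀ b₀ lam Lam)
    (hμ₁ : IsGoodMarginal μ₁ u₁ a₁ b₁ lam Lam)
    (ε : ℝ) (hε : 0 < ε) (f g : ℝ → ℝ)
    (hfg : IsPotentialPair μ₀ μ₁ a₀ b₀ a₁ b₁ ε f g) :
    (∀ x ∈ Icc a₀ b₀, ∀ t : ℝ, 0 < t → x + t ∈ Icc a₀ b₀ →
      Tmap μ₁ f g a₁ b₁ x ≤ (f (x + t) - f x) / t ∧
      (f (x + t) - f x) / t ≤ Tmap μ₁ f g a₁ b₁ (x + t)) ∧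
    MonotoneOn (Tmap μ₁ f g a₁ b₁) (Icc a₀ b₀) :=
  stmt0_general a₀ b₀ a₁ b₁ lam Lam μ₀ μ₁ u₁ hμ₁ ε hε f g hfg
end
end

section
/- Let ε > 0 and let (f, g) be a pair of ε-potentials such that sup_{x ∈ Ω₀} |S_x| ≤ (b₁ − a₁)/3. Then there is exactly one point x^{(M)} ∈ (a₀, b₀) with y_M(x^{(M)}) = b₁ and ξ(x^{(M)}, b₁) = 0, and exactly one point x^{(m)} ∈ (a₀, b₀) with y_m(x^{(m)}) = a₁ and ξ(x^{(m)}, a₁) = 0. The maps x ↦ y_m(x) and x ↦ y_M(x) are nondecreasing on Ω₀; more precisely, y_m(x) = a₁ for x ∈ [a₀, x^{(m)}] and x ↦ y_m(x) is strictly increasing on (x^{(m)}, b₀], while y_M(x) = b₁ for x ∈ [x^{(M)}, b₀] and x ↦ y_M(x) is strictly increasing on [a₀, x^{(M)}). -/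
open MeasureTheory Set
open scoped Classical ENNReal

noncomputable section

/-!
All sections `ξ(x, ·)₊` carry the same `μ₁`-mass `ε`, so none of them is strictly dominated by
another. Comparing `ξ(x, ·)` and `ξ(x', ·)` for `x < x'` therefore traps the chord slope
`(f x' - f x) / (x' - x)` strictly between `y_m(x)` and `y_M(x')`, which makes `y_m` and `y_M`
nondecreasing; continuity of `ξ` upgrades this to strict monotonicity wherever the endpoint has
not reached `a₁`, resp. `b₁`. Since `y_M(x) = b₁` iff `ξ(x, b₁) ≥ 0`, the plateau of `y_M` is
`[x_m(b₁), b₀]`, and `x^{(M)} = x_m(b₁)`; symmetrically `x^{(m)} = x_M(a₁)`. By convexity of `g`,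
`S_x = [y_m(x), y_M(x)]`, so the width bound forbids `y_m(x) = a₁` and `y_M(x) = b₁` at the same
`x`; as `y_m(a₀) = a₁` and `y_M(b₀) = b₁`, both points lie in `(a₀, b₀)`.
-/

open Topology

section PositivePart

variable {α : Type*} [MeasurableSpace α] {μ : Measure α} {φ h : α → ℝ}

theorem frequently_pos_of_integral_max_ne_zero (hne : ∫ x, max (φ x) 0 ∂μ ≠ 0) :
    ∃ᵐ x ∂μ, 0 < φ x := by
  contrapose! hne
  refine integral_eq_zero_of_ae ?_
  filter_upwards [hne] with x hx
  exact max_eq_right hx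

theorem integral_max_ne_of_ae_lt (hφ : Integrable (fun x => max (φ x) 0) μ)
    (hh : Integrable h μ) (h_nonneg : ∀ᵐ x ∂μ, 0 ≤ h x)
    (hlt : ∀ᵐ x ∂μ, 0 < φ x → φ x < h x) (hne : ∫ x, max (φ x) 0 ∂μ ≠ 0) :
    ∫ x, max (φ x) 0 ∂μ ≠ ∫ x, h x ∂μ := by
  intro heq
  have hle : (fun x => max (φ x) 0) ≤ᵐ[μ] h := by
    filter_upwards [h_nonneg, hlt] with x hx₀ hx
    rcases le_or_gt (φ x) 0 with hφx | hφx
    · exact max_le (hφx.trans hx₀) hx₀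
    · exact max_le (hx hφx).le hx₀
  have hae := (integral_eq_iff_of_ae_le hφ hh hle).1 heq
  obtain ⟨x, hpos, hx, hxlt⟩ :=
    ((frequently_pos_of_integral_max_ne_zero hne).and_eventually (hae.and hlt)).exists
  simp only [max_eq_left hpos.le] at hx
  exact (hxlt hpos).ne hx

end PositivePart

section Superlevel

variable {φ : ℝ → ℝ} {A B Y : ℝ}

theorem ContinuousOn.isClosed_sep_nonneg (hφ : ContinuousOn φ (Icc A B)) :
    IsClosed {y ∈ Icc A B | 0 ≤ φ y} :=
  hφ.preimage_isClosed_of_isClosed isClosed_Icc isClosed_Ici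

theorem ContinuousOn.sInf_sep_nonneg_mem (hφ : ContinuousOn φ (Icc A B))
    (hne : {y ∈ Icc A B | 0 ≤ φ y}.Nonempty) :
    sInf {y ∈ Icc A B | 0 ≤ φ y} ∈ {y ∈ Icc A B | 0 ≤ φ y} :=
  hφ.isClosed_sep_nonneg.csInf_mem hne (bddBelow_Icc.mono (sep_subset _ _))

theorem ContinuousOn.sSup_sep_nonneg_mem (hφ : ContinuousOn φ (Icc A B))
    (hne : {y ∈ Icc A B | 0 ≤ φ y}.Nonempty) :
    sSup {y ∈ Icc A B | 0 ≤ φ y} ∈ {y ∈ Icc A B | 0 ≤ φ y} :=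
  hφ.isClosed_sep_nonneg.csSup_mem hne (bddAbove_Icc.mono (sep_subset _ _))

theorem ContinuousOn.lt_sSup_sep_nonneg (hφ : ContinuousOn φ (Icc A B)) (hY : Y ∈ Icc A B)
    (hYB : Y < B) (hpos : 0 < φ Y) : Y < sSup {y ∈ Icc A B | 0 ≤ φ y} := by
  have hsub : Ioo Y B ⊆ Icc A B := fun y hy => ⟨hY.1.trans hy.1.le, hy.2.le⟩
  have hev : ∀ᶠ y in 𝓝[>] Y, 0 < φ y ∧ y ∈ Ioo Y B := by
    rw [← nhdsWithin_Ioo_eq_nhdsGT hYB]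
    exact (((hφ Y hY).mono hsub).eventually (lt_mem_nhds hpos)).and self_mem_nhdsWithin
  obtain ⟨y, hy, hyY⟩ := hev.exists
  exact hyY.1.trans_le (le_csSup (bddAbove_Icc.mono (sep_subset _ _)) ⟨hsub hyY, hy.le⟩)

theorem ContinuousOn.sInf_sep_nonneg_lt (hφ : ContinuousOn φ (Icc A B)) (hY : Y ∈ Icc A B)
    (hAY : A < Y) (hpos : 0 < φ Y) : sInf {y ∈ Icc A B | 0 ≤ φ y} < Y := by
  have hsub : Ioo A Y ⊆ Icc A B := fun y hy => ⟨hy.1.le, hy.2.le.trans hY.2⟩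
  have hev : ∀ᶠ y in 𝓝[<] Y, 0 < φ y ∧ y ∈ Ioo A Y := by
    rw [← nhdsWithin_Ioo_eq_nhdsLT hAY]
    exact (((hφ Y hY).mono hsub).eventually (lt_mem_nhds hpos)).and self_mem_nhdsWithin
  obtain ⟨y, hy, hyY⟩ := hev.exists
  exact (csInf_le (bddBelow_Icc.mono (sep_subset _ _)) ⟨hsub hyY, hy.le⟩).trans_lt hyY.2

end Superlevel

section Sections

variable {f g : ℝ → ℝ} {a₀ b₀ a₁ b₁ x y : ℝ}

theorem ymF_le (hy : y ∈ secX f g a₁ b₁ x) : ymF f g a₁ b₁ x ≤ y :=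
  csInf_le (bddBelow_Icc.mono (sep_subset _ _)) hy

theorem le_yMF (hy : y ∈ secX f g a₁ b₁ x) : y ≤ yMF f g a₁ b₁ x :=
  le_csSup (bddAbove_Icc.mono (sep_subset _ _)) hy

theorem xmF_le (hx : x ∈ secY f g a₀ b₀ y) : xmF f g a₀ b₀ y ≤ x :=
  csInf_le (bddBelow_Icc.mono (sep_subset _ _)) hx

theorem le_xMF (hx : x ∈ secY f g a₀ b₀ y) : x ≤ xMF f g a₀ b₀ y :=
  le_csSup (bddAbove_Icc.mono (sep_subset _ _)) hx

end Sections

namespace IsPotentialPair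

variable {μ₀ μ₁ : Measure ℝ} {a₀ b₀ a₁ b₁ ε : ℝ} {f g : ℝ → ℝ} {x x' y : ℝ}

theorem continuousOn_xi_left (hfg : IsPotentialPair μ₀ μ₁ a₀ b₀ a₁ b₁ ε f g) (y : ℝ) :
    ContinuousOn (fun x => x * y - f x - g y) (Icc a₀ b₀) := by
  have := hfg.1.choose_spec.continuousOn
  fun_prop

theorem continuousOn_xi_right (hfg : IsPotentialPair μ₀ μ₁ a₀ b₀ a₁ b₁ ε f g) (x : ℝ) :
    ContinuousOn (fun y => x * y - f x - g y) (Icc a₁ b₁) := by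
  have := hfg.2.1.choose_spec.continuousOn
  fun_prop

theorem integrableOn_max_left (hfg : IsPotentialPair μ₀ μ₁ a₀ b₀ a₁ b₁ ε f g)
    [IsFiniteMeasure μ₀] (y : ℝ) :
    IntegrableOn (fun x => max (x * y - f x - g y) 0) (Icc a₀ b₀) μ₀ :=
  ((hfg.continuousOn_xi_left y).sup continuousOn_const).integrableOn_Icc

theorem integrableOn_max_right (hfg : IsPotentialPair μ₀ μ₁ a₀ b₀ a₁ b₁ ε f g)
    [IsFiniteMeasure μ₁] (x : ℝ) :
    IntegrableOn (fun y => max (x * y - f x - g y) 0) (Icc a₁ b₁) μ₁ :=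
  ((hfg.continuousOn_xi_right x).sup continuousOn_const).integrableOn_Icc

theorem frequently_pos_left (hfg : IsPotentialPair μ₀ μ₁ a₀ b₀ a₁ b₁ ε f g) (hε : 0 < ε)
    (hy : y ∈ Icc a₁ b₁) : ∃ᵐ x ∂μ₀.restrict (Icc a₀ b₀), 0 < x * y - f x - g y :=
  frequently_pos_of_integral_max_ne_zero (by rw [hfg.2.2.2 y hy]; exact hε.ne')

theorem frequently_pos_right (hfg : IsPotentialPair μ₀ μ₁ a₀ b₀ a₁ b₁ ε f g) (hε : 0 < ε)
    (hx : x ∈ Icc a₀ b₀) : ∃ᵐ y ∂μ₁.restrict (Icc a₁ b₁), 0 < x * y - f x - g y :=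
  frequently_pos_of_integral_max_ne_zero (by rw [hfg.2.2.1 x hx]; exact hε.ne')

theorem secX_nonempty (hfg : IsPotentialPair μ₀ μ₁ a₀ b₀ a₁ b₁ ε f g) (hε : 0 < ε)
    (hx : x ∈ Icc a₀ b₀) : (secX f g a₁ b₁ x).Nonempty := by
  obtain ⟨y, hpos, hy⟩ :=
    ((hfg.frequently_pos_right hε hx).and_eventually (ae_restrict_mem measurableSet_Icc)).exists
  exact ⟨y, hy, hpos.le⟩

theorem secY_nonempty (hfg : IsPotentialPair μ₀ μ₁ a₀ b₀ a₁ b₁ ε f g) (hε : 0 < ε)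
    (hy : y ∈ Icc a₁ b₁) : (secY f g a₀ b₀ y).Nonempty := by
  obtain ⟨x, hpos, hx⟩ :=
    ((hfg.frequently_pos_left hε hy).and_eventually (ae_restrict_mem measurableSet_Icc)).exists
  exact ⟨x, hx, hpos.le⟩

theorem ymF_mem (hfg : IsPotentialPair μ₀ μ₁ a₀ b₀ a₁ b₁ ε f g) (hε : 0 < ε)
    (hx : x ∈ Icc a₀ b₀) : ymF f g a₁ b₁ x ∈ secX f g a₁ b₁ x :=
  (hfg.continuousOn_xi_right x).sInf_sep_nonneg_mem (hfg.secX_nonempty hε hx)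

theorem yMF_mem (hfg : IsPotentialPair μ₀ μ₁ a₀ b₀ a₁ b₁ ε f g) (hε : 0 < ε)
    (hx : x ∈ Icc a₀ b₀) : yMF f g a₁ b₁ x ∈ secX f g a₁ b₁ x :=
  (hfg.continuousOn_xi_right x).sSup_sep_nonneg_mem (hfg.secX_nonempty hε hx)

theorem xmF_mem (hfg : IsPotentialPair μ₀ μ₁ a₀ b₀ a₁ b₁ ε f g) (hε : 0 < ε)
    (hy : y ∈ Icc a₁ b₁) : xmF f g a₀ b₀ y ∈ secY f g a₀ b₀ y :=
  (hfg.continuousOn_xi_left y).sInf_sep_nonneg_mem (hfg.secY_nonempty hε hy)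

theorem xMF_mem (hfg : IsPotentialPair μ₀ μ₁ a₀ b₀ a₁ b₁ ε f g) (hε : 0 < ε)
    (hy : y ∈ Icc a₁ b₁) : xMF f g a₀ b₀ y ∈ secY f g a₀ b₀ y :=
  (hfg.continuousOn_xi_left y).sSup_sep_nonneg_mem (hfg.secY_nonempty hε hy)

theorem yMF_eq_iff (hfg : IsPotentialPair μ₀ μ₁ a₀ b₀ a₁ b₁ ε f g) (hε : 0 < ε)
    (hab₁ : a₁ ≤ b₁) (hx : x ∈ Icc a₀ b₀) : yMF f g a₁ b₁ x = b₁ ↔ 0 ≤ x * b₁ - f x - g b₁ := by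
  have hmem := hfg.yMF_mem hε hx
  exact ⟨fun h => h ▸ hmem.2, fun h => hmem.1.2.antisymm (le_yMF ⟨⟨hab₁, le_rfl⟩, h⟩)⟩

theorem ymF_eq_iff (hfg : IsPotentialPair μ₀ μ₁ a₀ b₀ a₁ b₁ ε f g) (hε : 0 < ε)
    (hab₁ : a₁ ≤ b₁) (hx : x ∈ Icc a₀ b₀) : ymF f g a₁ b₁ x = a₁ ↔ 0 ≤ x * a₁ - f x - g a₁ := by
  have hmem := hfg.ymF_mem hε hx
  exact ⟨fun h => h ▸ hmem.2, fun h => (ymF_le ⟨⟨le_rfl, hab₁⟩, h⟩).antisymm hmem.1.1⟩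

theorem xmF_lt (hfg : IsPotentialPair μ₀ μ₁ a₀ b₀ a₁ b₁ ε f g) (hε : 0 < ε)
    [NullSingletonClass μ₀] (hy : y ∈ Icc a₁ b₁) : xmF f g a₀ b₀ y < b₀ := by
  obtain ⟨x, hpos, hx, hne⟩ := ((hfg.frequently_pos_left hε hy).and_eventually
    ((ae_restrict_mem measurableSet_Icc).and (Measure.ae_ne _ b₀))).exists
  exact (xmF_le ⟨hx, hpos.le⟩).trans_lt (hx.2.lt_of_ne hne)

theorem lt_xMF (hfg : IsPotentialPair μ₀ μ₁ a₀ b₀ a₁ b₁ ε f g) (hε : 0 < ε)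
    [NullSingletonClass μ₀] (hy : y ∈ Icc a₁ b₁) : a₀ < xMF f g a₀ b₀ y := by
  obtain ⟨x, hpos, hx, hne⟩ := ((hfg.frequently_pos_left hε hy).and_eventually
    ((ae_restrict_mem measurableSet_Icc).and (Measure.ae_ne _ a₀))).exists
  exact (hx.1.lt_of_ne' hne).trans_le (le_xMF ⟨hx, hpos.le⟩)

theorem xi_xmF_eq_zero (hfg : IsPotentialPair μ₀ μ₁ a₀ b₀ a₁ b₁ ε f g) (hε : 0 < ε)
    (hy : y ∈ Icc a₁ b₁) (ha : a₀ < xmF f g a₀ b₀ y) :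
    xmF f g a₀ b₀ y * y - f (xmF f g a₀ b₀ y) - g y = 0 := by
  have hmem := hfg.xmF_mem hε hy
  refine le_antisymm (not_lt.1 fun hpos => ?_) hmem.2
  exact lt_irrefl _ ((hfg.continuousOn_xi_left y).sInf_sep_nonneg_lt hmem.1 ha hpos)

theorem xi_xMF_eq_zero (hfg : IsPotentialPair μ₀ μ₁ a₀ b₀ a₁ b₁ ε f g) (hε : 0 < ε)
    (hy : y ∈ Icc a₁ b₁) (hb : xMF f g a₀ b₀ y < b₀) :
    xMF f g a₀ b₀ y * y - f (xMF f g a₀ b₀ y) - g y = 0 := by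
  have hmem := hfg.xMF_mem hε hy
  refine le_antisymm (not_lt.1 fun hpos => ?_) hmem.2
  exact lt_irrefl _ ((hfg.continuousOn_xi_left y).lt_sSup_sep_nonneg hmem.1 hb hpos)

theorem convexOn_right (hfg : IsPotentialPair μ₀ μ₁ a₀ b₀ a₁ b₁ ε f g) (hε : 0 < ε)
    [IsFiniteMeasure μ₀] : ConvexOn ℝ (Icc a₁ b₁) g := by
  refine ⟨convex_Icc _ _, fun y₁ hy₁ y₂ hy₂ t s ht hs hts => ?_⟩
  have hy : t • y₁ + s • y₂ ∈ Icc a₁ b₁ := convex_Icc _ _ hy₁ hy₂ ht hs hts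
  simp only [smul_eq_mul] at hy ⊢
  by_contra! hlt
  have hξ_lt : ∀ x, x * (t * y₁ + s * y₂) - f x - g (t * y₁ + s * y₂)
      < t * (x * y₁ - f x - g y₁) + s * (x * y₂ - f x - g y₂) := fun x => by
    have hfx : t * f x + s * f x = f x := by rw [← add_mul, hts, one_mul]
    linarith
  have hint₁ := (hfg.integrableOn_max_left y₁).const_mul t
  have hint₂ := (hfg.integrableOn_max_left y₂).const_mul s
  refine integral_max_ne_of_ae_lt (hfg.integrableOn_max_left _)
    (h := fun x => t * max (x * y₁ - f x - g y₁) 0 + s * max (x * y₂ - f x - g y₂) 0)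
    (hint₁.add hint₂)
    (ae_of_all _ fun x =>
      add_nonneg (mul_nonneg ht (le_max_right _ _)) (mul_nonneg hs (le_max_right _ _)))
    (ae_of_all _ fun x _ => (hξ_lt x).trans_le ?_) (by rw [hfg.2.2.2 _ hy]; exact hε.ne') ?_
  · gcongr <;> exact le_max_left _ _
  · rw [hfg.2.2.2 _ hy, integral_add hint₁ hint₂, integral_const_mul, integral_const_mul,
      hfg.2.2.2 y₁ hy₁, hfg.2.2.2 y₂ hy₂]
    linear_combination (-ε) * hts

theorem convex_secX (hfg : IsPotentialPair μ₀ μ₁ a₀ b₀ a₁ b₁ ε f g) (hε : 0 < ε)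
    [IsFiniteMeasure μ₀] (x : ℝ) : Convex ℝ (secX f g a₁ b₁ x) := by
  intro y₁ hy₁ y₂ hy₂ t s ht hs hts
  refine ⟨convex_Icc _ _ hy₁.1 hy₂.1 ht hs hts, ?_⟩
  have hg := (hfg.convexOn_right hε).2 hy₁.1 hy₂.1 ht hs hts
  have hfx : t * f x + s * f x = f x := by rw [← add_mul, hts, one_mul]
  simp only [smul_eq_mul] at hg ⊢
  nlinarith [mul_nonneg ht hy₁.2, mul_nonneg hs hy₂.2]

theorem volume_secX (hfg : IsPotentialPair μ₀ μ₁ a₀ b₀ a₁ b₁ ε f g) (hε : 0 < ε)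
    [IsFiniteMeasure μ₀] (hx : x ∈ Icc a₀ b₀) :
    (volume (secX f g a₁ b₁ x)).toReal = yMF f g a₁ b₁ x - ymF f g a₁ b₁ x := by
  have hym := hfg.ymF_mem hε hx
  have hyM := hfg.yMF_mem hε hx
  have hIcc : secX f g a₁ b₁ x = Icc (ymF f g a₁ b₁ x) (yMF f g a₁ b₁ x) :=
    Subset.antisymm (fun y hy => ⟨ymF_le hy, le_yMF hy⟩)
      ((hfg.convex_secX hε x).ordConnected.out hym hyM)
  rw [hIcc, Real.volume_Icc, ENNReal.toReal_ofReal (sub_nonneg.2 (ymF_le hyM))]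

theorem not_ae_lt (hfg : IsPotentialPair μ₀ μ₁ a₀ b₀ a₁ b₁ ε f g) (hε : 0 < ε)
    [IsFiniteMeasure μ₁] (hx : x ∈ Icc a₀ b₀) (hx' : x' ∈ Icc a₀ b₀) :
    ¬ ∀ᵐ y ∂μ₁.restrict (Icc a₁ b₁),
      0 < x' * y - f x' - g y → x' * y - f x' - g y < x * y - f x - g y := fun h =>
  integral_max_ne_of_ae_lt (hfg.integrableOn_max_right x') (hfg.integrableOn_max_right x)
    (ae_of_all _ fun _ => le_max_right _ _)
    (h.mono fun _ hy hpos => (hy hpos).trans_le (le_max_left _ _))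
    (by rw [hfg.2.2.1 x' hx']; exact hε.ne') (by rw [hfg.2.2.1 x' hx', hfg.2.2.1 x hx])

section Comparison

variable [IsFiniteMeasure μ₁] [NullSingletonClass μ₁]

theorem sub_lt_mul_yMF (hfg : IsPotentialPair μ₀ μ₁ a₀ b₀ a₁ b₁ ε f g) (hε : 0 < ε)
    (hx : x ∈ Icc a₀ b₀) (hx' : x' ∈ Icc a₀ b₀) (hlt : x < x') :
    f x' - f x < (x' - x) * yMF f g a₁ b₁ x' := by
  by_contra! hle
  refine hfg.not_ae_lt hε hx hx' ?_
  filter_upwards [ae_restrict_mem measurableSet_Icc, Measure.ae_ne _ (yMF f g a₁ b₁ x')]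
    with y hy hne hpos
  have hy_lt : y < yMF f g a₁ b₁ x' := (le_yMF ⟨hy, hpos.le⟩).lt_of_ne hne
  nlinarith [mul_lt_mul_of_pos_left hy_lt (sub_pos.2 hlt)]

theorem mul_ymF_lt_sub (hfg : IsPotentialPair μ₀ μ₁ a₀ b₀ a₁ b₁ ε f g) (hε : 0 < ε)
    (hx : x ∈ Icc a₀ b₀) (hx' : x' ∈ Icc a₀ b₀) (hlt : x < x') :
    (x' - x) * ymF f g a₁ b₁ x < f x' - f x := by
  by_contra! hle
  refine hfg.not_ae_lt hε hx' hx ?_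
  filter_upwards [ae_restrict_mem measurableSet_Icc, Measure.ae_ne _ (ymF f g a₁ b₁ x)]
    with y hy hne hpos
  have hy_gt : ymF f g a₁ b₁ x < y := (ymF_le ⟨hy, hpos.le⟩).lt_of_ne' hne
  nlinarith [mul_lt_mul_of_pos_left hy_gt (sub_pos.2 hlt)]

theorem monotoneOn_yMF (hfg : IsPotentialPair μ₀ μ₁ a₀ b₀ a₁ b₁ ε f g) (hε : 0 < ε) :
    MonotoneOn (yMF f g a₁ b₁) (Icc a₀ b₀) := by
  intro x hx x' hx' hle
  rcases hle.eq_or_lt with rfl | hlt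
  · rfl
  rcases le_or_gt (f x' - f x) ((x' - x) * yMF f g a₁ b₁ x) with h | h
  · have hmem := hfg.yMF_mem hε hx
    exact le_yMF ⟨hmem.1, by linarith [hmem.2]⟩
  · exact (lt_of_mul_lt_mul_left (h.trans (hfg.sub_lt_mul_yMF hε hx hx' hlt))
      (sub_nonneg.2 hle)).le

theorem monotoneOn_ymF (hfg : IsPotentialPair μ₀ μ₁ a₀ b₀ a₁ b₁ ε f g) (hε : 0 < ε) :
    MonotoneOn (ymF f g a₁ b₁) (Icc a₀ b₀) := by
  intro x hx x' hx' hle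
  rcases hle.eq_or_lt with rfl | hlt
  · rfl
  rcases le_or_gt ((x' - x) * ymF f g a₁ b₁ x') (f x' - f x) with h | h
  · have hmem := hfg.ymF_mem hε hx'
    exact ymF_le ⟨hmem.1, by linarith [hmem.2]⟩
  · exact (lt_of_mul_lt_mul_left ((hfg.mul_ymF_lt_sub hε hx hx' hlt).trans h)
      (sub_nonneg.2 hle)).le

/-- Below `b₁` the right endpoint cannot stall: a common value `Y = y_M(x) = y_M(x')` would
satisfy `ξ(x', Y) > 0`, so by continuity `S_{x'}` would extend beyond `Y`. -/
theorem yMF_lt_yMF (hfg : IsPotentialPair μ₀ μ₁ a₀ b₀ a₁ b₁ ε f g) (hε : 0 < ε)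
    (hx : x ∈ Icc a₀ b₀) (hx' : x' ∈ Icc a₀ b₀) (hlt : x < x')
    (hb : yMF f g a₁ b₁ x' < b₁) : yMF f g a₁ b₁ x < yMF f g a₁ b₁ x' := by
  refine (hfg.monotoneOn_yMF hε hx hx' hlt.le).lt_of_ne fun heq => ?_
  have hmem := hfg.yMF_mem hε hx
  have hslope := hfg.sub_lt_mul_yMF hε hx hx' hlt
  rw [← heq] at hslope hb
  have hpos : 0 < x' * yMF f g a₁ b₁ x - f x' - g (yMF f g a₁ b₁ x) := by linarith [hmem.2]
  exact ((hfg.continuousOn_xi_right x').lt_sSup_sep_nonneg hmem.1 hb hpos).ne heq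

theorem ymF_lt_ymF (hfg : IsPotentialPair μ₀ μ₁ a₀ b₀ a₁ b₁ ε f g) (hε : 0 < ε)
    (hx : x ∈ Icc a₀ b₀) (hx' : x' ∈ Icc a₀ b₀) (hlt : x < x')
    (ha : a₁ < ymF f g a₁ b₁ x) : ymF f g a₁ b₁ x < ymF f g a₁ b₁ x' := by
  refine (hfg.monotoneOn_ymF hε hx hx' hlt.le).lt_of_ne fun heq => ?_
  have hmem := hfg.ymF_mem hε hx'
  have hslope := hfg.mul_ymF_lt_sub hε hx hx' hlt
  rw [heq] at hslope ha
  have hpos : 0 < x * ymF f g a₁ b₁ x' - f x - g (ymF f g a₁ b₁ x') := by linarith [hmem.2]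
  exact ((hfg.continuousOn_xi_right x).sInf_sep_nonneg_lt hmem.1 ha hpos).ne heq

theorem yMF_eq_iff_xmF_le (hfg : IsPotentialPair μ₀ μ₁ a₀ b₀ a₁ b₁ ε f g) (hε : 0 < ε)
    (hab₁ : a₁ ≤ b₁) (hx : x ∈ Icc a₀ b₀) : yMF f g a₁ b₁ x = b₁ ↔ xmF f g a₀ b₀ b₁ ≤ x := by
  have hxM := hfg.xmF_mem hε (right_mem_Icc.2 hab₁)
  refine ⟨fun h => xmF_le ⟨hx, (hfg.yMF_eq_iff hε hab₁ hx).1 h⟩, fun h => ?_⟩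
  refine (hfg.yMF_mem hε hx).1.2.antisymm ?_
  calc b₁ = yMF f g a₁ b₁ (xmF f g a₀ b₀ b₁) := ((hfg.yMF_eq_iff hε hab₁ hxM.1).2 hxM.2).symm
    _ ≤ yMF f g a₁ b₁ x := hfg.monotoneOn_yMF hε hxM.1 hx h

theorem ymF_eq_iff_le_xMF (hfg : IsPotentialPair μ₀ μ₁ a₀ b₀ a₁ b₁ ε f g) (hε : 0 < ε)
    (hab₁ : a₁ ≤ b₁) (hx : x ∈ Icc a₀ b₀) : ymF f g a₁ b₁ x = a₁ ↔ x ≤ xMF f g a₀ b₀ a₁ := by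
  have hxm := hfg.xMF_mem hε (left_mem_Icc.2 hab₁)
  refine ⟨fun h => le_xMF ⟨hx, (hfg.ymF_eq_iff hε hab₁ hx).1 h⟩, fun h => ?_⟩
  refine le_antisymm ?_ (hfg.ymF_mem hε hx).1.1
  calc ymF f g a₁ b₁ x ≤ ymF f g a₁ b₁ (xMF f g a₀ b₀ a₁) := hfg.monotoneOn_ymF hε hx hxm.1 h
    _ = a₁ := (hfg.ymF_eq_iff hε hab₁ hxm.1).2 hxm.2

/-- Past `x_m(b₁)` the map `x ↦ ξ(x, b₁)` is strictly increasing, since its chord slopes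
exceed `y_M = b₁`; so it has only one zero there. -/
theorem eq_xmF_of_yMF_eq (hfg : IsPotentialPair μ₀ μ₁ a₀ b₀ a₁ b₁ ε f g) (hε : 0 < ε)
    (hab₁ : a₁ ≤ b₁) (hx : x ∈ Icc a₀ b₀) (h : yMF f g a₁ b₁ x = b₁)
    (hξ : x * b₁ - f x - g b₁ = 0) (ha : a₀ < xmF f g a₀ b₀ b₁) : x = xmF f g a₀ b₀ b₁ := by
  have hb₁ := right_mem_Icc.2 hab₁
  refine ((((hfg.yMF_eq_iff_xmF_le hε hab₁ hx).1 h).eq_or_lt.resolve_right fun hlt => ?_)).symm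
  have hslope := hfg.sub_lt_mul_yMF hε (hfg.xmF_mem hε hb₁).1 hx hlt
  rw [h] at hslope
  linarith [hfg.xi_xmF_eq_zero hε hb₁ ha]

theorem eq_xMF_of_ymF_eq (hfg : IsPotentialPair μ₀ μ₁ a₀ b₀ a₁ b₁ ε f g) (hε : 0 < ε)
    (hab₁ : a₁ ≤ b₁) (hx : x ∈ Icc a₀ b₀) (h : ymF f g a₁ b₁ x = a₁)
    (hξ : x * a₁ - f x - g a₁ = 0) (hb : xMF f g a₀ b₀ a₁ < b₀) : x = xMF f g a₀ b₀ a₁ := by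
  have ha₁ := left_mem_Icc.2 hab₁
  refine ((hfg.ymF_eq_iff_le_xMF hε hab₁ hx).1 h).eq_or_lt.resolve_right fun hlt => ?_
  have hslope := hfg.mul_ymF_lt_sub hε hx (hfg.xMF_mem hε ha₁).1 hlt
  rw [h] at hslope
  linarith [hfg.xi_xMF_eq_zero hε ha₁ hb]

theorem strictMonoOn_yMF (hfg : IsPotentialPair μ₀ μ₁ a₀ b₀ a₁ b₁ ε f g) (hε : 0 < ε)
    (hab₁ : a₁ ≤ b₁) : StrictMonoOn (yMF f g a₁ b₁) (Ico a₀ (xmF f g a₀ b₀ b₁)) := by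
  have hsub : Ico a₀ (xmF f g a₀ b₀ b₁) ⊆ Icc a₀ b₀ := fun z hz =>
    ⟨hz.1, hz.2.le.trans (hfg.xmF_mem hε (right_mem_Icc.2 hab₁)).1.2⟩
  intro x hx x' hx' hlt
  refine hfg.yMF_lt_yMF hε (hsub hx) (hsub hx') hlt
    ((hfg.yMF_mem hε (hsub hx')).1.2.lt_of_ne fun h => ?_)
  exact hx'.2.not_ge ((hfg.yMF_eq_iff_xmF_le hε hab₁ (hsub hx')).1 h)

theorem strictMonoOn_ymF (hfg : IsPotentialPair μ₀ μ₁ a₀ b₀ a₁ b₁ ε f g) (hε : 0 < ε)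
    (hab₁ : a₁ ≤ b₁) : StrictMonoOn (ymF f g a₁ b₁) (Ioc (xMF f g a₀ b₀ a₁) b₀) := by
  have hsub : Ioc (xMF f g a₀ b₀ a₁) b₀ ⊆ Icc a₀ b₀ := fun z hz =>
    ⟨(hfg.xMF_mem hε (left_mem_Icc.2 hab₁)).1.1.trans hz.1.le, hz.2⟩
  intro x hx x' hx' hlt
  refine hfg.ymF_lt_ymF hε (hsub hx) (hsub hx') hlt
    ((hfg.ymF_mem hε (hsub hx)).1.1.lt_of_ne' fun h => ?_)
  exact hx.1.not_ge ((hfg.ymF_eq_iff_le_xMF hε hab₁ (hsub hx)).1 h)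

end Comparison

end IsPotentialPair

theorem IsGoodMarginal.nullSingletonClass {μ : Measure ℝ} {u : ℝ → ℝ} {a b lam Lam : ℝ}
    (h : IsGoodMarginal μ u a b lam Lam) : NullSingletonClass μ := by
  rw [h.2.1]
  infer_instance

theorem stmt2_general
    (a₀ b₀ a₁ b₁ lam Lam : ℝ) (μ₀ μ₁ : Measure ℝ) (u₀ u₁ : ℝ → ℝ)
    (hab₀ : a₀ < b₀) (hab₁ : a₁ < b₁)
    (hμ₀ : IsGoodMarginal μ₀ u₀ a₀ b₀ lam Lam)
    (hμ₁ : IsGoodMarginal μ₁ u₁ a₁ b₁ lam Lam)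
    (ε : ℝ) (hε : 0 < ε) (f g : ℝ → ℝ)
    (hfg : IsPotentialPair μ₀ μ₁ a₀ b₀ a₁ b₁ ε f g)
    (hsmall : ∀ x ∈ Icc a₀ b₀, (volume (secX f g a₁ b₁ x)).toReal ≤ (b₁ - a₁) / 3) :
    ∃ xM ∈ Ioo a₀ b₀, ∃ xm ∈ Ioo a₀ b₀,
      (yMF f g a₁ b₁ xM = b₁ ∧ xM * b₁ - f xM - g b₁ = 0) ∧
      (∀ x ∈ Ioo a₀ b₀, yMF f g a₁ b₁ x = b₁ → x * b₁ - f x - g b₁ = 0 → x = xM) ∧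
      (ymF f g a₁ b₁ xm = a₁ ∧ xm * a₁ - f xm - g a₁ = 0) ∧
      (∀ x ∈ Ioo a₀ b₀, ymF f g a₁ b₁ x = a₁ → x * a₁ - f x - g a₁ = 0 → x = xm) ∧
      MonotoneOn (ymF f g a₁ b₁) (Icc a₀ b₀) ∧
      MonotoneOn (yMF f g a₁ b₁) (Icc a₀ b₀) ∧
      (∀ x ∈ Icc a₀ xm, ymF f g a₁ b₁ x = a₁) ∧
      StrictMonoOn (ymF f g a₁ b₁) (Ioc xm b₀) ∧
      (∀ x ∈ Icc xM b₀, yMF f g a₁ b₁ x = b₁) ∧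
      StrictMonoOn (yMF f g a₁ b₁) (Ico a₀ xM) := by
  have := hμ₀.1
  have := hμ₁.1
  have := hμ₀.nullSingletonClass
  have := hμ₁.nullSingletonClass
  have ha₁ : a₁ ∈ Icc a₁ b₁ := left_mem_Icc.2 hab₁.le
  have hb₁ : b₁ ∈ Icc a₁ b₁ := right_mem_Icc.2 hab₁.le
  have ha₀ : a₀ ∈ Icc a₀ b₀ := left_mem_Icc.2 hab₀.le
  have hb₀ : b₀ ∈ Icc a₀ b₀ := right_mem_Icc.2 hab₀.le
  have hxM := (hfg.xmF_mem hε hb₁).1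
  have hxm := (hfg.xMF_mem hε ha₁).1
  have hyM := fun x (hx : x ∈ Icc a₀ b₀) => hfg.yMF_eq_iff_xmF_le hε hab₁.le hx
  have hym := fun x (hx : x ∈ Icc a₀ b₀) => hfg.ymF_eq_iff_le_xMF hε hab₁.le hx
  have hnot_full : ∀ x ∈ Icc a₀ b₀, ymF f g a₁ b₁ x = a₁ → yMF f g a₁ b₁ x ≠ b₁ := by
    intro x hx hm hM
    have := hsmall x hx
    rw [hfg.volume_secX hε hx, hm, hM] at this
    linarith
  have hxM_pos : a₀ < xmF f g a₀ b₀ b₁ := hxM.1.lt_of_ne fun h =>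
    hnot_full a₀ ha₀ ((hym a₀ ha₀).2 (hfg.lt_xMF hε ha₁).le) ((hyM a₀ ha₀).2 h.ge)
  have hxm_lt : xMF f g a₀ b₀ a₁ < b₀ := hxm.2.lt_of_ne fun h =>
    hnot_full b₀ hb₀ ((hym b₀ hb₀).2 h.ge) ((hyM b₀ hb₀).2 (hfg.xmF_lt hε hb₁).le)
  refine ⟨_, ⟨hxM_pos, hfg.xmF_lt hε hb₁⟩, _, ⟨hfg.lt_xMF hε ha₁, hxm_lt⟩,
    ⟨(hyM _ hxM).2 le_rfl, hfg.xi_xmF_eq_zero hε hb₁ hxM_pos⟩,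
    fun x hx h hξ => hfg.eq_xmF_of_yMF_eq hε hab₁.le (Ioo_subset_Icc_self hx) h hξ hxM_pos,
    ⟨(hym _ hxm).2 le_rfl, hfg.xi_xMF_eq_zero hε ha₁ hxm_lt⟩,
    fun x hx h hξ => hfg.eq_xMF_of_ymF_eq hε hab₁.le (Ioo_subset_Icc_self hx) h hξ hxm_lt,
    hfg.monotoneOn_ymF hε, hfg.monotoneOn_yMF hε,
    fun x hx => (hym x ⟨hx.1, hx.2.trans hxm.2⟩).2 hx.2, hfg.strictMonoOn_ymF hε hab₁.le,
    fun x hx => (hyM x ⟨hxM.1.trans hx.1, hx.2⟩).2 hx.1, hfg.strictMonoOn_yMF hε hab₁.le⟩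

theorem stmt2
    (a₀ b₀ a₁ b₁ lam Lam : ℝ) (μ₀ μ₁ : Measure ℝ) (u₀ u₁ : ℝ → ℝ)
    (hab₀ : a₀ < b₀) (hab₁ : a₁ < b₁) (hlam : 0 < lam)
    (hμ₀ : IsGoodMarginal μ₀ u₀ a₀ b₀ lam Lam)
    (hμ₁ : IsGoodMarginal μ₁ u₁ a₁ b₁ lam Lam)
    (ε : ℝ) (hε : 0 < ε) (f g : ℝ → ℝ)
    (hfg : IsPotentialPair μ₀ μ₁ a₀ b₀ a₁ b₁ ε f g)
    (hsmall : ∀ x ∈ Icc a₀ b₀, (volume (secX f g a₁ b₁ x)).toReal ≤ (b₁ - a₁) / 3) :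
    ∃ xM ∈ Ioo a₀ b₀, ∃ xm ∈ Ioo a₀ b₀,
      (yMF f g a₁ b₁ xM = b₁ ∧ xM * b₁ - f xM - g b₁ = 0) ∧
      (∀ x ∈ Ioo a₀ b₀, yMF f g a₁ b₁ x = b₁ → x * b₁ - f x - g b₁ = 0 → x = xM) ∧
      (ymF f g a₁ b₁ xm = a₁ ∧ xm * a₁ - f xm - g a₁ = 0) ∧
      (∀ x ∈ Ioo a₀ b₀, ymF f g a₁ b₁ x = a₁ → x * a₁ - f x - g a₁ = 0 → x = xm) ∧
      MonotoneOn (ymF f g a₁ b₁) (Icc a₀ b₀) ∧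
      MonotoneOn (yMF f g a₁ b₁) (Icc a₀ b₀) ∧
      (∀ x ∈ Icc a₀ xm, ymF f g a₁ b₁ x = a₁) ∧
      StrictMonoOn (ymF f g a₁ b₁) (Ioc xm b₀) ∧
      (∀ x ∈ Icc xM b₀, yMF f g a₁ b₁ x = b₁) ∧
      StrictMonoOn (yMF f g a₁ b₁) (Ico a₀ xM) :=
  stmt2_general a₀ b₀ a₁ b₁ lam Lam μ₀ μ₁ u₀ u₁ hab₀ hab₁ hμ₀ hμ₁ ε hε f g hfg hsmall
end
end

section
/- Let ε > 0 and let (f, g) be a pair of ε-potentials. Then for every x ∈ Ω₀: ε/Λ ≤ (max_{y ∈ Ω₁} ξ(x, y)) · |S_x| ≤ 2ε/λ. -/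
/-!
Since `c ↦ ∫ (x y - f x - c)₊ dμ₀(x)` is strictly decreasing wherever it is positive, the
equations in `y` force `g` to be convex: a chord of `g` lying below `g` at some point would make
that integral exceed `ε` there. Hence `ξ = x y - f x - g y` is concave in `y`, its nonnegativity
set `S_x` is an interval `[p, q]`, and `ξ` attains its maximum `M` at some `m ∈ [p, q]`.
The equation in `x` reads `ε = ∫_{S_x} ξ dμ₁`, which the density bounds compare with
`∫_{S_x} ξ dy`; the latter is at most `M |S_x|`, and at least `M |S_x| / 2` because the concave
`ξ` lies above the tent over `[p, q]` with apex `(m, M)`.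
-/

open MeasureTheory Set
open scoped Classical ENNReal

noncomputable section

section PositivePartIntegral

variable {α : Type*} [MeasurableSpace α] {μ : Measure α}

theorem integral_max_sub_zero_lt {F : α → ℝ} {c c' : ℝ} (hc : c < c')
    (hpos : 0 < ∫ x, max (F x - c') 0 ∂μ) (hint : Integrable (fun x => max (F x - c) 0) μ) :
    ∫ x, max (F x - c') 0 ∂μ < ∫ x, max (F x - c) 0 ∂μ := by
  have hint' : Integrable (fun x => max (F x - c') 0) μ := Integrable.of_integral_ne_zero hpos.ne'
  have hle : ∀ x, max (F x - c') 0 ≤ max (F x - c) 0 := fun x => max_le_max (by linarith) le_rfl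
  -- the gap `(F - c)₊ - (F - c')₊` is positive on the support of `(F - c')₊`, which is not null
  rw [← sub_pos, ← integral_sub hint hint']
  refine (integral_pos_iff_support_of_nonneg (fun x => sub_nonneg.2 (hle x))
    (hint.sub hint')).2 ?_
  refine ((integral_pos_iff_support_of_nonneg (fun x => le_max_right _ _) hint').1 hpos).trans_le
    (measure_mono fun x hx => ?_)
  have hx' : 0 < F x - c' := by
    by_contra! h
    exact hx (max_eq_right h)
  simp only [Function.mem_support, max_eq_left hx'.le]
  rw [max_eq_left (by linarith)]
  linarith

theorem convexOn_of_integral_max_sub_zero_eq {T : Set ℝ} {F : α → ℝ → ℝ} {g : ℝ → ℝ} {ε : ℝ}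
    (hε : 0 < ε) (hT : Convex ℝ T) (hF : ∀ x, ConvexOn ℝ T (F x))
    (hFm : ∀ y ∈ T, AEStronglyMeasurable (fun x => F x y) μ)
    (hg : ∀ y ∈ T, ∫ x, max (F x y - g y) 0 ∂μ = ε) : ConvexOn ℝ T g := by
  refine ⟨hT, fun y hy z hz t s ht hs hts => ?_⟩
  set w := t • y + s • z
  set c := t • g y + s • g z
  have hw : w ∈ T := hT hy hz ht hs hts
  have hint : ∀ y ∈ T, Integrable (fun x => max (F x y - g y) 0) μ := fun y hy =>
    Integrable.of_integral_ne_zero (by rw [hg y hy]; exact hε.ne')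
  have hdom : ∀ x, max (F x w - c) 0 ≤ t * max (F x y - g y) 0 + s * max (F x z - g z) 0 := by
    intro x
    have := (hF x).2 hy hz ht hs hts
    simp only [w, c, smul_eq_mul] at this ⊢
    refine max_le ?_ (by positivity)
    nlinarith [le_max_left (F x y - g y) 0, le_max_left (F x z - g z) 0]
  have hmaj : Integrable (fun x => t * max (F x y - g y) 0 + s * max (F x z - g z) 0) μ :=
    ((hint y hy).const_mul t).add ((hint z hz).const_mul s)
  have hint_w : Integrable (fun x => max (F x w - c) 0) μ :=
    hmaj.mono' (((hFm w hw).sub aestronglyMeasurable_const).sup aestronglyMeasurable_const)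
      (Filter.Eventually.of_forall fun x => by
        rw [Real.norm_of_nonneg (le_max_right _ _)]; exact hdom x)
  have hle : ∫ x, max (F x w - c) 0 ∂μ ≤ ε :=
    calc _ ≤ ∫ x, (t * max (F x y - g y) 0 + s * max (F x z - g z) 0) ∂μ :=
          integral_mono hint_w hmaj hdom
      _ = ε := by
          rw [integral_add ((hint y hy).const_mul t) ((hint z hz).const_mul s), integral_const_mul,
            integral_const_mul, hg y hy, hg z hz, ← add_mul, hts, one_mul]
  by_contra! hlt
  have hgt := integral_max_sub_zero_lt hlt (by rw [hg w hw]; exact hε) hint_w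
  rw [hg w hw] at hgt
  exact hle.not_gt hgt

end PositivePartIntegral

theorem convexOn_mul_sub_const (x c : ℝ) {s : Set ℝ} (hs : Convex ℝ s) :
    ConvexOn ℝ s fun y => x * y - c :=
  (LinearMap.mulLeft ℝ x).convexOn hs |>.sub (concaveOn_const c hs)

theorem concaveOn_mul_sub_const (x c : ℝ) {s : Set ℝ} (hs : Convex ℝ s) :
    ConcaveOn ℝ s fun y => x * y - c :=
  (LinearMap.mulLeft ℝ x).concaveOn hs |>.sub (convexOn_const c hs)

section ConcaveIntegral

variable {h : ℝ → ℝ} {p q r y : ℝ}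

theorem ConcaveOn.sub_mul_add_sub_mul_le (hconc : ConcaveOn ℝ (Icc p r) h) (hy : y ∈ Icc p r) :
    (r - y) * h p + (y - p) * h r ≤ (r - p) * h y := by
  rcases eq_or_lt_of_le (hy.1.trans hy.2) with rfl | hpr
  · obtain rfl : y = p := le_antisymm hy.2 hy.1
    simp
  have hrp : 0 < r - p := sub_pos.2 hpr
  have key := hconc.2 (left_mem_Icc.2 hpr.le) (right_mem_Icc.2 hpr.le)
    (div_nonneg (sub_nonneg.2 hy.2) hrp.le) (div_nonneg (sub_nonneg.2 hy.1) hrp.le)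
    (by field_simp; ring)
  have hpt : (r - y) / (r - p) * p + (y - p) / (r - p) * r = y := by
    field_simp; ring
  simp only [smul_eq_mul, hpt] at key
  rw [div_mul_eq_mul_div, div_mul_eq_mul_div, ← add_div, div_le_iff₀ hrp] at key
  linarith

theorem ConcaveOn.trapezoid_le_intervalIntegral (hpr : p ≤ r) (hconc : ConcaveOn ℝ (Icc p r) h)
    (hcont : ContinuousOn h (Icc p r)) :
    (h p + h r) * (r - p) / 2 ≤ ∫ y in p..r, h y := by
  rcases eq_or_lt_of_le hpr with rfl | hpr
  · simp
  have hmono : ∫ y in p..r, ((r - y) * h p + (y - p) * h r) ≤ (r - p) * ∫ y in p..r, h y := by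
    rw [← intervalIntegral.integral_const_mul]
    exact intervalIntegral.integral_mono_on hpr.le
      (by apply Continuous.intervalIntegrable; fun_prop)
      ((hcont.mono (by rw [uIcc_of_le hpr.le])).intervalIntegrable.const_mul _)
      fun y hy => hconc.sub_mul_add_sub_mul_le hy
  have hlin : ∫ y in p..r, ((r - y) * h p + (y - p) * h r) = (h p + h r) * (r - p) ^ 2 / 2 := by
    rw [intervalIntegral.integral_add (by apply Continuous.intervalIntegrable; fun_prop)
      (by apply Continuous.intervalIntegrable; fun_prop), intervalIntegral.integral_mul_const,
      intervalIntegral.integral_mul_const, intervalIntegral.integral_comp_sub_left (fun y => y)]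
    simp only [integral_id, intervalIntegral.integral_comp_sub_right (fun y => y)]
    ring
  rw [div_le_iff₀ two_pos]
  nlinarith [sub_pos.2 hpr]

theorem ConcaveOn.mul_sub_le_two_mul_intervalIntegral (hm : y ∈ Icc p q)
    (hconc : ConcaveOn ℝ (Icc p q) h) (hcont : ContinuousOn h (Icc p q))
    (hp : 0 ≤ h p) (hq : 0 ≤ h q) :
    h y * (q - p) ≤ 2 * ∫ x in p..q, h x := by
  have hleft : Icc p y ⊆ Icc p q := Icc_subset_Icc le_rfl hm.2
  have hright : Icc y q ⊆ Icc p q := Icc_subset_Icc hm.1 le_rfl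
  have h₁ := (hconc.subset hleft (convex_Icc _ _)).trapezoid_le_intervalIntegral hm.1
    (hcont.mono hleft)
  have h₂ := (hconc.subset hright (convex_Icc _ _)).trapezoid_le_intervalIntegral hm.2
    (hcont.mono hright)
  rw [← intervalIntegral.integral_add_adjacent_intervals
    ((hcont.mono (hleft.trans' (by rw [uIcc_of_le hm.1])))).intervalIntegrable
    ((hcont.mono (hright.trans' (by rw [uIcc_of_le hm.2])))).intervalIntegrable]
  nlinarith [sub_nonneg.2 hm.1, sub_nonneg.2 hm.2]

end ConcaveIntegral

section Superlevel

variable {ξ : ℝ → ℝ} {a b : ℝ}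

theorem isCompact_sep_nonneg (hξ : ContinuousOn ξ (Icc a b)) :
    IsCompact {y ∈ Icc a b | 0 ≤ ξ y} :=
  isCompact_Icc.of_isClosed_subset
    (hξ.preimage_isClosed_of_isClosed isClosed_Icc isClosed_Ici) (sep_subset _ _)

theorem setIntegral_max_zero_eq_setIntegral_sep_nonneg (hξ : ContinuousOn ξ (Icc a b))
    (μ : Measure ℝ) :
    ∫ y in Icc a b, max (ξ y) 0 ∂μ = ∫ y in {y ∈ Icc a b | 0 ≤ ξ y}, ξ y ∂μ := by
  rw [setIntegral_eq_of_subset_of_forall_sdiff_eq_zero measurableSet_Icc (sep_subset _ _)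
    fun y hy => max_eq_right (not_le.1 fun h => hy.2 ⟨hy.1, h⟩).le]
  exact setIntegral_congr_fun (isCompact_sep_nonneg hξ).isClosed.measurableSet
    fun y hy => max_eq_left hy.2

theorem setIntegral_sep_nonneg_le_sSup_mul (hξ : ContinuousOn ξ (Icc a b)) :
    ∫ y in {y ∈ Icc a b | 0 ≤ ξ y}, ξ y ≤
      sSup (ξ '' Icc a b) * volume.real {y ∈ Icc a b | 0 ≤ ξ y} := by
  refine (Real.le_norm_self _).trans ?_
  refine norm_setIntegral_le_of_norm_le_const ((isCompact_sep_nonneg hξ).measure_lt_top (μ := volume))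
    fun y hy => ?_
  rw [Real.norm_of_nonneg hy.2]
  exact le_csSup (isCompact_Icc.bddAbove_image hξ) (mem_image_of_mem ξ hy.1)

theorem ConcaveOn.sSup_mul_le_two_mul_setIntegral_sep_nonneg (hconc : ConcaveOn ℝ (Icc a b) ξ)
    (hξ : ContinuousOn ξ (Icc a b)) :
    sSup (ξ '' Icc a b) * volume.real {y ∈ Icc a b | 0 ≤ ξ y} ≤
      2 * ∫ y in {y ∈ Icc a b | 0 ≤ ξ y}, ξ y := by
  set S := {y ∈ Icc a b | 0 ≤ ξ y}
  rcases S.eq_empty_or_nonempty with hS | ⟨y₀, hy₀⟩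
  · simp [hS]
  obtain ⟨m, hm, hmax⟩ := isCompact_Icc.exists_isMaxOn ⟨y₀, hy₀.1⟩ hξ
  have hmS : m ∈ S := ⟨hm, hy₀.2.trans (hmax hy₀.1)⟩
  have hScpt : IsCompact S := isCompact_sep_nonneg hξ
  have hSIcc : S = Icc (sInf S) (sSup S) :=
    eq_Icc_of_connected_compact ⟨⟨m, hmS⟩, (hconc.convex_ge 0).isPreconnected⟩ hScpt
  have hsup : sSup (ξ '' Icc a b) = ξ m :=
    IsGreatest.csSup_eq ⟨mem_image_of_mem ξ hm, by rintro _ ⟨y, hy, rfl⟩; exact hmax hy⟩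
  have hpq : sInf S ≤ sSup S := csInf_le_csSup ⟨m, hmS⟩ hScpt.bddBelow hScpt.bddAbove
  have hsub : Icc (sInf S) (sSup S) ⊆ Icc a b := hSIcc ▸ (sep_subset _ _)
  rw [hsup, hSIcc, Real.volume_real_Icc_of_le hpq, integral_Icc_eq_integral_Ioc,
    ← intervalIntegral.integral_of_le hpq]
  exact (hconc.subset hsub (convex_Icc _ _)).mul_sub_le_two_mul_intervalIntegral
    (hSIcc ▸ hmS) (hξ.mono hsub) (hScpt.sInf_mem ⟨m, hmS⟩).2 (hScpt.sSup_mem ⟨m, hmS⟩).2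

end Superlevel

section Marginal

variable {μ : Measure ℝ} {u φ : ℝ → ℝ} {a b lam Lam : ℝ} {s : Set ℝ}

theorem IsGoodMarginal.ofReal_smul_le (hμ : IsGoodMarginal μ u a b lam Lam) :
    ENNReal.ofReal lam • volume.restrict (Icc a b) ≤ μ := by
  rw [hμ.2.1, ← withDensity_const]
  exact withDensity_mono <| (ae_restrict_iff' measurableSet_Icc).2 <|
    Filter.Eventually.of_forall fun y hy => ENNReal.ofReal_le_ofReal (hμ.2.2.2 y hy).1

theorem IsGoodMarginal.le_ofReal_smul (hμ : IsGoodMarginal μ u a b lam Lam) :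
    μ ≤ ENNReal.ofReal Lam • volume.restrict (Icc a b) := by
  rw [hμ.2.1, ← withDensity_const]
  exact withDensity_mono <| (ae_restrict_iff' measurableSet_Icc).2 <|
    Filter.Eventually.of_forall fun y hy => ENNReal.ofReal_le_ofReal (hμ.2.2.2 y hy).2

theorem IsGoodMarginal.mul_setIntegral_le (hμ : IsGoodMarginal μ u a b lam Lam) (hlam : 0 ≤ lam)
    (hs : MeasurableSet s) (hsI : s ⊆ Icc a b) (hφ : ∀ y ∈ s, 0 ≤ φ y)
    (hint : IntegrableOn φ s μ) :
    lam * ∫ y in s, φ y ≤ ∫ y in s, φ y ∂μ := by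
  have hle : ENNReal.ofReal lam • volume.restrict s ≤ μ.restrict s := by
    calc _ = (ENNReal.ofReal lam • volume.restrict (Icc a b)).restrict s := by
          rw [Measure.restrict_smul, Measure.restrict_restrict hs,
            inter_eq_self_of_subset_left hsI]
      _ ≤ μ.restrict s := Measure.restrict_mono le_rfl hμ.ofReal_smul_le
  calc lam * ∫ y in s, φ y = ∫ y, φ y ∂(ENNReal.ofReal lam • volume.restrict s) := by
        rw [integral_smul_measure, ENNReal.toReal_ofReal hlam, smul_eq_mul]
    _ ≤ ∫ y in s, φ y ∂μ :=
        integral_mono_measure hle ((ae_restrict_iff' hs).2 (Filter.Eventually.of_forall hφ)) hint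

theorem IsGoodMarginal.setIntegral_le_mul (hμ : IsGoodMarginal μ u a b lam Lam) (hLam : 0 ≤ Lam)
    (hs : MeasurableSet s) (hφ : ∀ y ∈ s, 0 ≤ φ y) (hint : IntegrableOn φ s) :
    ∫ y in s, φ y ∂μ ≤ Lam * ∫ y in s, φ y := by
  have hle : μ.restrict s ≤ ENNReal.ofReal Lam • volume.restrict s := by
    calc μ.restrict s ≤ (ENNReal.ofReal Lam • volume.restrict (Icc a b)).restrict s :=
          Measure.restrict_mono le_rfl hμ.le_ofReal_smul
      _ = ENNReal.ofReal Lam • volume.restrict (s ∩ Icc a b) := by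
          rw [Measure.restrict_smul, Measure.restrict_restrict hs]
      _ ≤ _ := by gcongr; exact inter_subset_left
  calc ∫ y in s, φ y ∂μ ≤ ∫ y, φ y ∂(ENNReal.ofReal Lam • volume.restrict s) :=
        integral_mono_measure hle
          (Measure.ae_smul_measure ((ae_restrict_iff' hs).2 (Filter.Eventually.of_forall hφ)) _)
          (hint.smul_measure ENNReal.ofReal_ne_top)
    _ = Lam * ∫ y in s, φ y := by
        rw [integral_smul_measure, ENNReal.toReal_ofReal hLam, smul_eq_mul]

theorem IsGoodMarginal.sSup_mul_volume_bounds_of_concaveOn {ξ : ℝ → ℝ} {ε : ℝ}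
    (hμ : IsGoodMarginal μ u a b lam Lam) (hab : a ≤ b) (hlam : 0 < lam)
    (hconc : ConcaveOn ℝ (Icc a b) ξ) (hξ : ContinuousOn ξ (Icc a b))
    (hε : ∫ y in Icc a b, max (ξ y) 0 ∂μ = ε) :
    ε / Lam ≤ sSup (ξ '' Icc a b) * (volume {y ∈ Icc a b | 0 ≤ ξ y}).toReal ∧
      sSup (ξ '' Icc a b) * (volume {y ∈ Icc a b | 0 ≤ ξ y}).toReal ≤ 2 * ε / lam := by
  have : IsProbabilityMeasure μ := hμ.1
  have hS : IsCompact {y ∈ Icc a b | 0 ≤ ξ y} := isCompact_sep_nonneg hξ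
  have hξS : ∀ y ∈ {y ∈ Icc a b | 0 ≤ ξ y}, 0 ≤ ξ y := fun y hy => hy.2
  have hεS : ε = ∫ y in {y ∈ Icc a b | 0 ≤ ξ y}, ξ y ∂μ :=
    hε.symm.trans (setIntegral_max_zero_eq_setIntegral_sep_nonneg hξ μ)
  have hΛ : 0 < Lam := hlam.trans_le ((hμ.2.2.2 a ⟨le_rfl, hab⟩).1.trans
    (hμ.2.2.2 a ⟨le_rfl, hab⟩).2)
  rw [div_le_iff₀ hΛ, le_div_iff₀ hlam, ← measureReal_def]
  constructor
  · calc ε ≤ Lam * ∫ y in {y ∈ Icc a b | 0 ≤ ξ y}, ξ y :=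
          hεS ▸ hμ.setIntegral_le_mul hΛ.le hS.isClosed.measurableSet hξS
            ((hξ.mono (sep_subset _ _)).integrableOn_compact hS)
      _ ≤ _ := by
          rw [mul_comm _ Lam]
          exact mul_le_mul_of_nonneg_left (setIntegral_sep_nonneg_le_sSup_mul hξ) hΛ.le
  · calc _ ≤ 2 * (lam * ∫ y in {y ∈ Icc a b | 0 ≤ ξ y}, ξ y) := by
          nlinarith [hconc.sSup_mul_le_two_mul_setIntegral_sep_nonneg hξ]
      _ ≤ 2 * ε := by
          rw [hεS]
          gcongr
          exact hμ.mul_setIntegral_le hlam.le hS.isClosed.measurableSet (sep_subset _ _) hξS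
            ((hξ.mono (sep_subset _ _)).integrableOn_compact hS)

end Marginal

theorem stmt5_general
    (a₀ b₀ a₁ b₁ lam Lam : ℝ) (μ₀ μ₁ : Measure ℝ) (u₁ : ℝ → ℝ)
    (hab₁ : a₁ < b₁) (hlam : 0 < lam)
    (hμ₁ : IsGoodMarginal μ₁ u₁ a₁ b₁ lam Lam)
    (ε : ℝ) (hε : 0 < ε) (f g : ℝ → ℝ)
    (hfg : IsPotentialPair μ₀ μ₁ a₀ b₀ a₁ b₁ ε f g) :
    ∀ x ∈ Icc a₀ b₀,
      ε / Lam ≤ sSup ((fun y => x * y - f x - g y) '' Icc a₁ b₁) *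
          (volume (secX f g a₁ b₁ x)).toReal ∧
      sSup ((fun y => x * y - f x - g y) '' Icc a₁ b₁) *
          (volume (secX f g a₁ b₁ x)).toReal ≤ 2 * ε / lam := by
  obtain ⟨⟨_, hf⟩, ⟨_, hg⟩, hεx, hεy⟩ := hfg
  have hgconv : ConvexOn ℝ (Icc a₁ b₁) g :=
    convexOn_of_integral_max_sub_zero_eq (F := fun x y => x * y - f x) hε (convex_Icc _ _)
      (fun x => convexOn_mul_sub_const x (f x) (convex_Icc _ _))
      (fun y _ => (continuous_mul_const y).continuousOn.sub hf.continuousOn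
        |>.aestronglyMeasurable measurableSet_Icc) hεy
  intro x hx
  exact hμ₁.sSup_mul_volume_bounds_of_concaveOn hab₁.le hlam
    ((concaveOn_mul_sub_const x (f x) (convex_Icc _ _)).sub hgconv)
    (((continuous_const_mul x).sub continuous_const).continuousOn.sub hg.continuousOn)
    (hεx x hx)

theorem stmt5
    (a₀ b₀ a₁ b₁ lam Lam : ℝ) (μ₀ μ₁ : Measure ℝ) (u₀ u₁ : ℝ → ℝ)
    (hab₀ : a₀ < b₀) (hab₁ : a₁ < b₁) (hlam : 0 < lam)
    (hμ₀ : IsGoodMarginal μ₀ u₀ a₀ b₀ lam Lam)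
    (hμ₁ : IsGoodMarginal μ₁ u₁ a₁ b₁ lam Lam)
    (ε : ℝ) (hε : 0 < ε) (f g : ℝ → ℝ)
    (hfg : IsPotentialPair μ₀ μ₁ a₀ b₀ a₁ b₁ ε f g) :
    ∀ x ∈ Icc a₀ b₀,
      ε / Lam ≤ sSup ((fun y => x * y - f x - g y) '' Icc a₁ b₁) *
          (volume (secX f g a₁ b₁ x)).toReal ∧
      sSup ((fun y => x * y - f x - g y) '' Icc a₁ b₁) *
          (volume (secX f g a₁ b₁ x)).toReal ≤ 2 * ε / lam :=
  stmt5_general a₀ b₀ a₁ b₁ lam Lam μ₀ μ₁ u₁ hab₁ hlam hμ₁ ε hε f g hfg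
end
end
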